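/- arXiv:1411.0186 — 4 statements merged into one kernel-verified Lean document; each statement's English description precedes it below -/
import Mathlib

section
/- Let (Ω, μ) be a probability space with a filtration (F_n)_{n∈ℕ}, let (M_n) be a martingale with respect to (F_n), let k ∈ ℕ, and let (N_n) be a sequence of integrable functions such that each N_n is strongly F_n-measurable and |N_n(ω) − M_n(ω)| ≤ 2^{-(n+k+2)} for every ω and n. Define L_0 = N_0 and L_{n+1} = N_{n+1} − μ[N_{n+1} | F_n] + L_n. Then (L_n) is a martingale with respect to (F_n), and for every n, for μ-almost every ω, |L_n(ω) − M_n(ω)| ≤ (2 − 2^{-n})·2^{-(k+1)}, and in particular |L_n(ω) − M_n(ω)| < 2^{-k}. -/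
/-!
The increments `N (n + 1) - μ[N (n + 1)|ℱ n]` have zero conditional expectation given `ℱ n`, so `L`
is a martingale. Since `M` is a martingale, `μ[N (n + 1)|ℱ n] = μ[D|ℱ n] + M n` for
`D = N (n + 1) - M (n + 1)`, hence `L (n + 1) - M (n + 1) = D - μ[D|ℱ n] + (L n - M n)`: each step
adds an error of at most twice the sup-norm bound `2 ^ (-(n + k + 3))` on `D`, and these sum to less
than `2 ^ (-(k + 1))`.
-/

open MeasureTheory Finset

namespace MeasureTheory

variable {Ω E : Type*} [NormedAddCommGroup E] [NormedSpace ℝ E]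
  {m m0 : MeasurableSpace Ω} {μ : Measure Ω}

theorem condExp_sub_condExp_ae_eq_zero [CompleteSpace E] (hm : m ≤ m0)
    [SigmaFinite (μ.trim hm)] {f : Ω → E} (hf : Integrable f μ) : μ[f - μ[f|m]|m] =ᵐ[μ] 0 := by
  filter_upwards [condExp_sub hf integrable_condExp m] with ω hω
  rw [hω, Pi.sub_apply,
    condExp_of_stronglyMeasurable hm stronglyMeasurable_condExp integrable_condExp, sub_self,
    Pi.zero_apply]

theorem ae_norm_sub_condExp_le [CompleteSpace E] {f : Ω → E} {R : ℝ}
    (hf : ∀ᵐ ω ∂μ, ‖f ω‖ ≤ R) : ∀ᵐ ω ∂μ, ‖f ω - μ[f|m] ω‖ ≤ 2 * R := by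
  filter_upwards [hf, ae_bdd_norm_condExp_of_ae_bdd_norm (m := m) hf] with ω hf hcondExp
  calc ‖f ω - μ[f|m] ω‖ ≤ ‖f ω‖ + ‖μ[f|m] ω‖ := norm_sub_le _ _
    _ ≤ 2 * R := by linarith

section Correction

variable {ℱ : Filtration ℕ m0} {N L : ℕ → Ω → E}

theorem stronglyAdapted_of_succ_eq_sub_condExp_add (hN : StronglyAdapted ℱ N) (hL0 : L 0 = N 0)
    (hLsucc : ∀ n, L (n + 1) = N (n + 1) - μ[N (n + 1)|ℱ n] + L n) : StronglyAdapted ℱ L := by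
  intro n
  induction n with
  | zero => rw [hL0]; exact hN 0
  | succ n ih =>
    rw [hLsucc]
    exact ((hN (n + 1)).sub (stronglyMeasurable_condExp.mono (ℱ.mono n.le_succ))).add
      (ih.mono (ℱ.mono n.le_succ))

theorem integrable_of_succ_eq_sub_condExp_add [CompleteSpace E] (hN : ∀ n, Integrable (N n) μ)
    (hL0 : L 0 = N 0)
    (hLsucc : ∀ n, L (n + 1) = N (n + 1) - μ[N (n + 1)|ℱ n] + L n) (n : ℕ) :
    Integrable (L n) μ := by
  induction n with
  | zero => rw [hL0]; exact hN 0
  | succ n ih => rw [hLsucc]; exact ((hN (n + 1)).sub integrable_condExp).add ih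

theorem martingale_of_succ_eq_sub_condExp_add [CompleteSpace E] [IsFiniteMeasure μ]
    (hN : StronglyAdapted ℱ N) (hNint : ∀ n, Integrable (N n) μ) (hL0 : L 0 = N 0)
    (hLsucc : ∀ n, L (n + 1) = N (n + 1) - μ[N (n + 1)|ℱ n] + L n) : Martingale L ℱ μ := by
  have hLint := integrable_of_succ_eq_sub_condExp_add (ℱ := ℱ) hNint hL0 hLsucc
  have hLadapted := stronglyAdapted_of_succ_eq_sub_condExp_add hN hL0 hLsucc
  refine martingale_nat hLadapted hLint fun n => ?_
  have hLn : μ[L n|ℱ n] = L n := condExp_of_stronglyMeasurable (ℱ.le n) (hLadapted n) (hLint n)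
  filter_upwards [condExp_add ((hNint (n + 1)).sub integrable_condExp) (hLint n) (ℱ n),
    condExp_sub_condExp_ae_eq_zero (ℱ.le n) (hNint (n + 1))] with ω hadd hzero
  rw [hLsucc, hadd, Pi.add_apply, hzero, hLn, Pi.zero_apply, zero_add]

theorem Martingale.sub_succ_ae_eq [CompleteSpace E] {M : ℕ → Ω → E}
    (hM : Martingale M ℱ μ) (hNint : ∀ n, Integrable (N n) μ)
    (hLsucc : ∀ n, L (n + 1) = N (n + 1) - μ[N (n + 1)|ℱ n] + L n) (n : ℕ) :
    L (n + 1) - M (n + 1) =ᵐ[μ]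
      N (n + 1) - M (n + 1) - μ[N (n + 1) - M (n + 1)|ℱ n] + (L n - M n) := by
  filter_upwards [condExp_sub (hNint (n + 1)) (hM.integrable (n + 1)) (ℱ n),
    hM.condExp_ae_eq n.le_succ] with ω hsub hM_succ
  simp only [hLsucc, Pi.add_apply, Pi.sub_apply] at hsub ⊢
  rw [hsub, hM_succ]
  abel

theorem Martingale.ae_norm_sub_le [CompleteSpace E] {M : ℕ → Ω → E}
    (hM : Martingale M ℱ μ) (hNint : ∀ n, Integrable (N n) μ) (hL0 : L 0 = N 0)
    (hLsucc : ∀ n, L (n + 1) = N (n + 1) - μ[N (n + 1)|ℱ n] + L n) {ε : ℕ → ℝ}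
    (hε : ∀ n, ∀ᵐ ω ∂μ, ‖N n ω - M n ω‖ ≤ ε n) (n : ℕ) :
    ∀ᵐ ω ∂μ, ‖L n ω - M n ω‖ ≤ ε 0 + 2 * ∑ i ∈ range n, ε (i + 1) := by
  induction n with
  | zero => simpa [hL0] using hε 0
  | succ n ih =>
    filter_upwards [hM.sub_succ_ae_eq hNint hLsucc n, ih,
      ae_norm_sub_condExp_le (m := ℱ n) (f := N (n + 1) - M (n + 1)) (hε (n + 1))]
      with ω hstep hn hcorrection
    simp only [Pi.add_apply, Pi.sub_apply] at hstep hcorrection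
    rw [hstep, sum_range_succ]
    calc ‖_ + (L n ω - M n ω)‖ ≤ 2 * ε (n + 1) + ‖L n ω - M n ω‖ :=
          (norm_add_le _ _).trans (by gcongr)
      _ ≤ _ := by linarith

end Correction

end MeasureTheory

theorem two_zpow_add_two_mul_sum_le (k n : ℕ) :
    (2 : ℝ) ^ (-(k + 2 : ℤ)) + 2 * ∑ i ∈ range n, (2 : ℝ) ^ (-(i + k + 3 : ℤ)) ≤
      (2 - (2 : ℝ) ^ (-(n : ℤ))) * (2 : ℝ) ^ (-(k + 1 : ℤ)) := by
  induction n with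
  | zero => norm_num
  | succ n ih =>
    rw [sum_range_succ]
    have hstep : 2 * (2 : ℝ) ^ (-(n + k + 3 : ℤ)) + (2 - (2 : ℝ) ^ (-(n : ℤ))) * 2 ^ (-(k + 1 : ℤ))
        = (2 - (2 : ℝ) ^ (-(n + 1 : ℕ) : ℤ)) * 2 ^ (-(k + 1 : ℤ)) := by
      simp only [neg_add, zpow_add₀ (two_ne_zero' ℝ), zpow_neg, zpow_natCast, Nat.cast_add,
        Nat.cast_one]
      field_simp
      ring
    linarith

theorem two_sub_two_zpow_mul_lt (k n : ℕ) :
    (2 - (2 : ℝ) ^ (-(n : ℤ))) * (2 : ℝ) ^ (-(k + 1 : ℤ)) < (2 : ℝ) ^ (-(k : ℤ)) := by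
  have hhalf : (2 : ℝ) ^ (-(k : ℤ)) = 2 * 2 ^ (-(k + 1 : ℤ)) := by
    rw [neg_add, zpow_add₀ two_ne_zero]; norm_num; ring
  rw [hhalf]
  gcongr
  exact sub_lt_self _ (by positivity)

theorem stmt_0_general {Ω : Type*} {m0 : MeasurableSpace Ω} {μ : Measure Ω} [IsProbabilityMeasure μ]
    (ℱ : Filtration ℕ m0) (M : ℕ → Ω → ℝ) (hM : Martingale M ℱ μ)
    (k : ℕ) (N : ℕ → Ω → ℝ)
    (hNint : ∀ n, Integrable (N n) μ)
    (hNmeas : ∀ n, StronglyMeasurable[ℱ n] (N n))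
    (hNclose : ∀ n ω, |N n ω - M n ω| ≤ (2 : ℝ) ^ (-(n + k + 2 : ℤ)))
    (L : ℕ → Ω → ℝ)
    (hL0 : L 0 = N 0)
    (hLsucc : ∀ n, L (n + 1) = N (n + 1) - μ[N (n + 1)|ℱ n] + L n) :
    Martingale L ℱ μ ∧ (∀ n, Integrable (L n) μ) ∧
      ∀ n, ∀ᵐ ω ∂μ,
        |L n ω - M n ω| ≤ (2 - (2 : ℝ) ^ (-(n : ℤ))) * (2 : ℝ) ^ (-(k + 1 : ℤ)) ∧
        |L n ω - M n ω| < (2 : ℝ) ^ (-(k : ℤ)) := by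
  have hL := martingale_of_succ_eq_sub_condExp_add hNmeas hNint hL0 hLsucc
  refine ⟨hL, hL.integrable, fun n => ?_⟩
  filter_upwards [hM.ae_norm_sub_le hNint hL0 hLsucc (fun n => ae_of_all _ (hNclose n)) n]
    with ω hω
  have hbound : |L n ω - M n ω| ≤ (2 - (2 : ℝ) ^ (-(n : ℤ))) * (2 : ℝ) ^ (-(k + 1 : ℤ)) := by
    refine hω.trans (le_of_eq_of_le ?_ (two_zpow_add_two_mul_sum_le k n))
    push_cast
    ring_nf
  exact ⟨hbound, hbound.trans_lt (two_sub_two_zpow_mul_lt k n)⟩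

theorem stmt_0 {Ω : Type*} {m0 : MeasurableSpace Ω} {μ : Measure Ω} [IsProbabilityMeasure μ]
    (ℱ : Filtration ℕ m0) (M : ℕ → Ω → ℝ) (hM : Martingale M ℱ μ)
    (hMint : ∀ n, Integrable (M n) μ)
    (k : ℕ) (N : ℕ → Ω → ℝ)
    (hNint : ∀ n, Integrable (N n) μ)
    (hNmeas : ∀ n, StronglyMeasurable[ℱ n] (N n))
    (hNclose : ∀ n ω, |N n ω - M n ω| ≤ (2 : ℝ) ^ (-(n + k + 2 : ℤ)))
    (L : ℕ → Ω → ℝ)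
    (hL0 : L 0 = N 0)
    (hLsucc : ∀ n, L (n + 1) = N (n + 1) - μ[N (n + 1)|ℱ n] + L n) :
    Martingale L ℱ μ ∧ (∀ n, Integrable (L n) μ) ∧
      ∀ n, ∀ᵐ ω ∂μ,
        |L n ω - M n ω| ≤ (2 - (2 : ℝ) ^ (-(n : ℤ))) * (2 : ℝ) ^ (-(k + 1 : ℤ)) ∧
        |L n ω - M n ω| < (2 : ℝ) ^ (-(k : ℤ)) :=
  stmt_0_general ℱ M hM k N hNint hNmeas hNclose L hL0 hLsucc
end

section
/- Let (Ω, μ) be a probability space with a filtration (F_n)_{n∈ℕ}, and let (M_n) be a martingale with respect to (F_n) such that M_n(ω) > 0 for all n and ω. Then there exists a martingale (N_n) with respect to (F_n) such that N_0 = M_0, N_n(ω) > 0 for all n and ω, and for every ω with limsup_n M_n(ω) = ∞, one has liminf_n N_n(ω) = ∞. -/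
/-!
Keep capital in two accounts: savings `S`, which are never bet again, and a fraction `c` of the
original strategy, so that `N n = S n + c n * M n`. Whenever the active capital `c * M` exceeds
`S + 1`, half of it is moved to savings and `c` is halved. This is a martingale transform of `M`
by the predictable strategy `c ∈ (0, 1]`, hence a martingale. If `limsup M = ∞` the transfer
happens infinitely often, each time adding at least `1/2` to the savings, so `N ≥ S → ∞`.
-/

open MeasureTheory Filter

section MartingaleTransform

variable {Ω : Type*} {m0 : MeasurableSpace Ω} {μ : Measure Ω} {ℱ : Filtration ℕ m0}

theorem Martingale.sum_mul_sub [IsFiniteMeasure μ] {R : ℝ} {ξ f : ℕ → Ω → ℝ}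
    (hf : Martingale f ℱ μ) (hξ : StronglyAdapted ℱ ξ) (hbdd : ∀ n ω, ξ n ω ≤ R)
    (hnonneg : ∀ n ω, 0 ≤ ξ n ω) :
    Martingale (fun n => ∑ k ∈ Finset.range n, ξ k * (f (k + 1) - f k)) ℱ μ := by
  refine martingale_iff.2 ⟨?_, hf.submartingale.sum_mul_sub hξ hbdd hnonneg⟩
  convert (hf.neg.submartingale.sum_mul_sub hξ hbdd hnonneg).neg using 1
  ext n ω
  simp only [Pi.neg_apply, Finset.sum_apply, Pi.mul_apply, Pi.sub_apply,
    ← Finset.sum_neg_distrib]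
  exact Finset.sum_congr rfl fun k _ => by ring

end MartingaleTransform

theorem tendsto_atTop_of_monotone_of_frequently_add_le {u : ℕ → ℝ} {δ : ℝ} (hu : Monotone u)
    (hδ : 0 < δ) (h : ∃ᶠ n in atTop, u n + δ ≤ u (n + 1)) : Tendsto u atTop atTop := by
  have hgrow : ∀ j : ℕ, ∃ n, u 0 + j * δ ≤ u n := by
    intro j
    induction j with
    | zero => exact ⟨0, by simp⟩
    | succ j ih =>
      obtain ⟨n, hn⟩ := ih
      obtain ⟨m, hnm, hm⟩ := frequently_atTop.1 h n
      exact ⟨m + 1, by push_cast; linarith [hu hnm]⟩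
  refine tendsto_atTop_atTop_of_monotone hu fun b => ?_
  obtain ⟨j, hj⟩ := exists_nat_gt ((b - u 0) / δ)
  obtain ⟨n, hn⟩ := hgrow j
  exact ⟨n, by linarith [(div_lt_iff₀ hδ).1 hj]⟩

theorem frequently_lt_of_limsup_coe_eq_top {α : Type*} {l : Filter α} {u : α → ℝ}
    (h : limsup (fun n => (u n : EReal)) l = ⊤) (C : ℝ) : ∃ᶠ n in l, C < u n :=
  (frequently_lt_of_lt_limsup (by isBoundedDefault) (h ▸ EReal.coe_lt_top C)).mono
    fun _ hn => EReal.coe_lt_coe_iff.1 hn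

namespace Savings

/-- One step of the strategy on the state `(c, S)` (fraction still bet, savings) when the
martingale moves to `x`. -/
noncomputable def step (x : ℝ) (p : ℝ × ℝ) : ℝ × ℝ :=
  if p.2 + 1 ≤ p.1 * x then (p.1 / 2, p.2 + p.1 * x / 2) else p

theorem measurable_step : Measurable fun q : ℝ × ℝ × ℝ => step q.1 q.2 := by
  unfold step
  exact Measurable.ite (measurableSet_le (by fun_prop) (by fun_prop)) (by fun_prop) (by fun_prop)

theorem step_snd_add_fst_mul (x : ℝ) (p : ℝ × ℝ) :
    (step x p).2 + (step x p).1 * x = p.2 + p.1 * x := by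
  unfold step
  split_ifs <;> ring

theorem step_fst_pos (x : ℝ) {p : ℝ × ℝ} (hp : 0 < p.1) : 0 < (step x p).1 := by
  unfold step
  split_ifs <;> simp [hp]

theorem step_fst_le (x : ℝ) {p : ℝ × ℝ} (hp : 0 < p.1) : (step x p).1 ≤ p.1 := by
  unfold step
  split_ifs <;> simp [hp.le]

theorem le_step_snd (x : ℝ) {p : ℝ × ℝ} (hp : 0 ≤ p.2) : p.2 ≤ (step x p).2 := by
  unfold step
  split_ifs with h
  · dsimp only
    linarith
  · rfl

variable {Ω : Type*} (M : ℕ → Ω → ℝ)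

noncomputable def state : ℕ → Ω → ℝ × ℝ
  | 0 => fun _ => (1, 0)
  | n + 1 => fun ω => step (M (n + 1) ω) (state n ω)

noncomputable def fraction (n : ℕ) (ω : Ω) : ℝ := (state M n ω).1

noncomputable def savings (n : ℕ) (ω : Ω) : ℝ := (state M n ω).2

noncomputable def capital (n : ℕ) (ω : Ω) : ℝ := savings M n ω + fraction M n ω * M n ω

theorem fraction_mem_Ioc (n : ℕ) (ω : Ω) : fraction M n ω ∈ Set.Ioc 0 1 := by
  induction n with
  | zero => simp [fraction, state]
  | succ n ih =>
    exact ⟨step_fst_pos _ ih.1, (step_fst_le _ ih.1).trans ih.2⟩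

theorem savings_nonneg (n : ℕ) (ω : Ω) : 0 ≤ savings M n ω := by
  induction n with
  | zero => simp [savings, state]
  | succ n ih => exact ih.trans (le_step_snd _ ih)

theorem savings_mono (ω : Ω) : Monotone fun n => savings M n ω :=
  monotone_nat_of_le_succ fun n => le_step_snd _ (savings_nonneg M n ω)

theorem capital_zero : capital M 0 = M 0 := by
  ext ω
  simp [capital, savings, fraction, state]

theorem capital_succ (n : ℕ) (ω : Ω) :
    capital M (n + 1) ω = capital M n ω + fraction M n ω * (M (n + 1) ω - M n ω) := by
  have := step_snd_add_fst_mul (M (n + 1) ω) (state M n ω)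
  simp only [capital, savings, fraction, state] at this ⊢
  linarith

theorem capital_eq_add_sum (n : ℕ) :
    capital M n = M 0 + ∑ k ∈ Finset.range n, fraction M k * (M (k + 1) - M k) := by
  induction n with
  | zero => simp [capital_zero]
  | succ n ih =>
    ext ω
    simp only [capital_succ, ih, Finset.sum_range_succ, Pi.add_apply, Pi.mul_apply, Pi.sub_apply,
      Finset.sum_apply]
    ring

theorem measurable_state {m0 : MeasurableSpace Ω} {ℱ : Filtration ℕ m0}
    (hM : StronglyAdapted ℱ M) (n : ℕ) : Measurable[ℱ n] (state M n) := by
  induction n with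
  | zero => exact measurable_const
  | succ n ih =>
    exact measurable_step.comp
      ((hM (n + 1)).measurable.prodMk (ih.mono (ℱ.mono n.le_succ) le_rfl))

theorem martingale_capital {m0 : MeasurableSpace Ω} {μ : Measure Ω} [IsFiniteMeasure μ]
    {ℱ : Filtration ℕ m0} (hM : Martingale M ℱ μ) : Martingale (capital M) ℱ μ := by
  have hc : StronglyAdapted ℱ (fraction M) := fun n =>
    (measurable_state M hM.stronglyAdapted n).fst.stronglyMeasurable
  have hM0 : Martingale (fun _ => M 0) ℱ μ :=
    martingale_const_fun ℱ μ (hM.stronglyAdapted 0) (hM.integrable 0)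
  convert hM0.add (Martingale.sum_mul_sub hM hc (fun n ω => (fraction_mem_Ioc M n ω).2)
    (fun n ω => (fraction_mem_Ioc M n ω).1.le)) using 1
  ext n : 1
  exact capital_eq_add_sum M n

variable {M}

theorem state_eq_of_forall_lt {ω : Ω} {k : ℕ}
    (h : ∀ n ≥ k, fraction M n ω * M (n + 1) ω < savings M n ω + 1) :
    ∀ n ≥ k, state M n ω = state M k ω := by
  intro n hn
  induction n, hn using Nat.le_induction with
  | base => rfl
  | succ n hkn ih => exact (if_neg (not_le.2 (h n hkn))).trans ih

theorem frequently_savings_add_one_le {ω : Ω} (hM : ∀ C : ℝ, ∃ᶠ n in atTop, C < M n ω) :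
    ∃ᶠ n in atTop, savings M n ω + 1 ≤ fraction M n ω * M (n + 1) ω := by
  rw [frequently_atTop]
  intro k
  by_contra! h
  have hc := (fraction_mem_Ioc M k ω).1
  have hbound : ∀ n ≥ k, M (n + 1) ω < (savings M k ω + 1) / fraction M k ω := fun n hn => by
    have hs := state_eq_of_forall_lt h n hn
    rw [lt_div_iff₀ hc, mul_comm]
    simpa [fraction, savings, hs] using h n hn
  obtain ⟨n, hn, hlt⟩ := frequently_atTop.1 (hM ((savings M k ω + 1) / fraction M k ω)) (k + 1)
  obtain ⟨m, rfl⟩ : ∃ m, n = m + 1 := ⟨n - 1, by omega⟩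
  exact (hbound m (by omega)).not_gt hlt

theorem savings_add_half_le {n : ℕ} {ω : Ω}
    (h : savings M n ω + 1 ≤ fraction M n ω * M (n + 1) ω) :
    savings M n ω + 1 / 2 ≤ savings M (n + 1) ω := by
  have hS := savings_nonneg M n ω
  simp only [savings, fraction] at h hS ⊢
  simp only [state, step, if_pos h]
  linarith

theorem tendsto_savings_atTop {ω : Ω} (hM : ∀ C : ℝ, ∃ᶠ n in atTop, C < M n ω) :
    Tendsto (fun n => savings M n ω) atTop atTop :=
  tendsto_atTop_of_monotone_of_frequently_add_le (savings_mono M ω) one_half_pos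
    ((frequently_savings_add_one_le hM).mono fun _ hn => savings_add_half_le hn)

theorem capital_pos {ω : Ω} (hMpos : ∀ n, 0 < M n ω) (n : ℕ) : 0 < capital M n ω :=
  add_pos_of_nonneg_of_pos (savings_nonneg M n ω)
    (mul_pos (fraction_mem_Ioc M n ω).1 (hMpos n))

theorem tendsto_capital_atTop {ω : Ω} (hMpos : ∀ n, 0 < M n ω)
    (hM : ∀ C : ℝ, ∃ᶠ n in atTop, C < M n ω) : Tendsto (fun n => capital M n ω) atTop atTop :=
  tendsto_atTop_mono
    (fun n => le_add_of_nonneg_right (mul_nonneg (fraction_mem_Ioc M n ω).1.le (hMpos n).le))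
    (tendsto_savings_atTop hM)

end Savings

theorem stmt_3_general {Ω : Type*} {m0 : MeasurableSpace Ω} {μ : Measure Ω} [IsProbabilityMeasure μ]
    (ℱ : Filtration ℕ m0) (M : ℕ → Ω → ℝ) (hM : Martingale M ℱ μ)
    (hMpos : ∀ n ω, 0 < M n ω) :
    ∃ N : ℕ → Ω → ℝ, Martingale N ℱ μ ∧ (∀ n, Integrable (N n) μ) ∧ N 0 = M 0 ∧ (∀ n ω, 0 < N n ω) ∧
      ∀ ω, limsup (fun n => (M n ω : EReal)) atTop = ⊤ →
        liminf (fun n => (N n ω : EReal)) atTop = ⊤ := by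
  have hN := Savings.martingale_capital M hM
  refine ⟨Savings.capital M, hN, hN.integrable, Savings.capital_zero M,
    fun n ω => Savings.capital_pos (hMpos · ω) n, fun ω hω => ?_⟩
  have hNω := Savings.tendsto_capital_atTop (hMpos · ω) (frequently_lt_of_limsup_coe_eq_top hω)
  exact (EReal.tendsto_coe_atTop.comp hNω).liminf_eq

theorem stmt_3 {Ω : Type*} {m0 : MeasurableSpace Ω} {μ : Measure Ω} [IsProbabilityMeasure μ]
    (ℱ : Filtration ℕ m0) (M : ℕ → Ω → ℝ) (hM : Martingale M ℱ μ)
    (hMint : ∀ n, Integrable (M n) μ)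
    (hMpos : ∀ n ω, 0 < M n ω) :
    ∃ N : ℕ → Ω → ℝ, Martingale N ℱ μ ∧ (∀ n, Integrable (N n) μ) ∧ N 0 = M 0 ∧ (∀ n ω, 0 < N n ω) ∧
      ∀ ω, limsup (fun n => (M n ω : EReal)) atTop = ⊤ →
        liminf (fun n => (N n ω : EReal)) atTop = ⊤ :=
  stmt_3_general ℱ M hM hMpos
end

section
/- Let (Ω, μ) be a probability space with a filtration (F_p) indexed by ℕ × ℕ with the lexicographic order. Suppose (M_m)_{m∈ℕ} is a martingale with respect to the filtration (F_{(m,0)})_{m∈ℕ}. Define N_{(m,n)} = μ[M_{m+1} | F_{(m,n)}]. Then (N_p)_{p∈ℕ×ℕ} is a martingale with respect to (F_p), and N_{(m,0)} = M_m almost everywhere for each m. -/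
/-!
Any family `f i` whose conditional expectations are compatible, i.e. `μ[f j | ℱ i] = μ[f i | ℱ i]`
for `i ≤ j`, yields the martingale `μ[f i | ℱ i]` by the tower property. For `N` this compatibility
comes from `(m, n) ≤ (m + 1, 0)`: conditioning `M (m' + 1)` on `ℱ (m + 1, 0)` first turns it into
`M (m + 1)` by the martingale property of `M`.
-/

open MeasureTheory

section

variable {Ω E : Type*} {m0 : MeasurableSpace Ω} {μ : Measure Ω}
  [NormedAddCommGroup E] [NormedSpace ℝ E] [CompleteSpace E]

theorem martingale_condExp_of_condExp_ae_eq {ι : Type*} [Preorder ι] {ℱ : Filtration ι m0}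
    [SigmaFiniteFiltration μ ℱ] {f : ι → Ω → E}
    (hf : ∀ i j, i ≤ j → μ[f j|ℱ i] =ᵐ[μ] μ[f i|ℱ i]) :
    Martingale (fun i => μ[f i|ℱ i]) ℱ μ :=
  ⟨fun _ => stronglyMeasurable_condExp, fun i j hij =>
    (condExp_condExp_of_le (ℱ.mono hij) (ℱ.le j)).trans (hf i j hij)⟩

theorem condExp_succ_fst_ae_eq_of_le {ℱ : Filtration (ℕ ×ₗ ℕ) m0} [SigmaFiniteFiltration μ ℱ]
    {M : ℕ → Ω → E} (hM : ∀ m m', m ≤ m' → μ[M m'|ℱ (toLex (m, 0))] =ᵐ[μ] M m)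
    {p q : ℕ ×ₗ ℕ} (hpq : p ≤ q) :
    μ[M ((ofLex q).1 + 1)|ℱ p] =ᵐ[μ] μ[M ((ofLex p).1 + 1)|ℱ p] := by
  have hp_le : p ≤ toLex ((ofLex p).1 + 1, 0) :=
    Prod.Lex.le_iff.mpr (Or.inl (Nat.lt_succ_self _))
  have hfst : (ofLex p).1 ≤ (ofLex q).1 := Prod.Lex.monotone_fst_ofLex hpq
  calc μ[M ((ofLex q).1 + 1)|ℱ p]
      =ᵐ[μ] μ[μ[M ((ofLex q).1 + 1)|ℱ (toLex ((ofLex p).1 + 1, 0))]|ℱ p] :=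
        (condExp_condExp_of_le (ℱ.mono hp_le) (ℱ.le _)).symm
    _ =ᵐ[μ] μ[M ((ofLex p).1 + 1)|ℱ p] := condExp_congr_ae (hM _ _ (by omega))

end

theorem stmt_5_general {Ω : Type*} {m0 : MeasurableSpace Ω} {μ : Measure Ω} [IsProbabilityMeasure μ]
    (ℱ : Filtration (ℕ ×ₗ ℕ) m0)
    (M : ℕ → Ω → ℝ)
    (hMmart : ∀ m m', m ≤ m' → μ[M m'|ℱ (toLex (m, 0))] =ᵐ[μ] M m)
    (N : ℕ ×ₗ ℕ → Ω → ℝ)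
    (hN : ∀ p : ℕ ×ₗ ℕ, N p = μ[M ((ofLex p).1 + 1)|ℱ p]) :
    Martingale N ℱ μ ∧ (∀ p : ℕ ×ₗ ℕ, Integrable (N p) μ) ∧ ∀ m, N (toLex (m, 0)) =ᵐ[μ] M m := by
  obtain rfl : N = fun p => μ[M ((ofLex p).1 + 1)|ℱ p] := funext hN
  exact ⟨martingale_condExp_of_condExp_ae_eq fun _ _ => condExp_succ_fst_ae_eq_of_le hMmart,
    fun _ => integrable_condExp, fun m => hMmart m (m + 1) m.le_succ⟩

theorem stmt_5 {Ω : Type*} {m0 : MeasurableSpace Ω} {μ : Measure Ω} [IsProbabilityMeasure μ]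
    (ℱ : Filtration (ℕ ×ₗ ℕ) m0)
    (M : ℕ → Ω → ℝ)
    (hMint : ∀ m, Integrable (M m) μ)
    (hMmeas : ∀ m, StronglyMeasurable[ℱ (toLex (m, 0))] (M m))
    (hMmart : ∀ m m', m ≤ m' → μ[M m'|ℱ (toLex (m, 0))] =ᵐ[μ] M m)
    (N : ℕ ×ₗ ℕ → Ω → ℝ)
    (hN : ∀ p : ℕ ×ₗ ℕ, N p = μ[M ((ofLex p).1 + 1)|ℱ p]) :
    Martingale N ℱ μ ∧ (∀ p : ℕ ×ₗ ℕ, Integrable (N p) μ) ∧ ∀ m, N (toLex (m, 0)) =ᵐ[μ] M m :=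
  stmt_5_general ℱ M hMmart N hN
end

section
/- Let (Ω₁, μ₁) be a probability space and let Ω₂ = ℕ → Bool carry the fair-coin product measure μ₂. For n ∈ ℕ let F_n be the sub-σ-algebra of Ω₂ generated by the coordinate maps β ↦ β(i) for i < n, and let G_n be the sub-σ-algebra of Ω₁ × Ω₂ generated by the first projection together with the maps (α,β) ↦ β(i) for i < n. Suppose (M_n) is a sequence of (μ₁ ⊗ μ₂)-integrable functions M_n : Ω₁ × Ω₂ → ℝ, each strongly G_n-measurable, such that for μ₁-almost every α ∈ Ω₁ and every n, μ₂[M_{n+1}(α, ·) | F_n] = M_n(α, ·) μ₂-almost everywhere. Then (M_n) is a martingale on (Ω₁ × Ω₂, μ₁ ⊗ μ₂) with respect to the filtration (G_n). -/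
/-!
On a rectangle `A ×ˢ B` with `B` in the coin σ-algebra `F m`, Fubini turns the set integral of
`M n` into an integral over `α ∈ A` of fibrewise set integrals over `B`, and for almost every `α`
the fibre martingale property makes these agree with those of `M m`. Rectangles form a π-system
generating `G m`, so the set integrals of `M n` and `M m` agree on all of `G m`, i.e. `M m` is
the conditional expectation of `M n` given `G m`.
-/

open MeasureTheory

namespace MeasureTheory

variable {α β ι E : Type*} [NormedAddCommGroup E] [NormedSpace ℝ E]

theorem setIntegral_eq_of_isPiSystem {m m₀ : MeasurableSpace α} (hm : m ≤ m₀) {μ : Measure α}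
    {S : Set (Set α)} (hgen : m = MeasurableSpace.generateFrom S) (hpi : IsPiSystem S)
    {f g : α → E} (hf : Integrable f μ) (hg : Integrable g μ)
    (huniv : ∫ x, f x ∂μ = ∫ x, g x ∂μ) (hS : ∀ s ∈ S, ∫ x in s, f x ∂μ = ∫ x in s, g x ∂μ)
    {s : Set α} (hs : MeasurableSet[m] s) :
    ∫ x in s, f x ∂μ = ∫ x in s, g x ∂μ := by
  induction s, hs using MeasurableSpace.induction_on_inter hgen hpi with
  | empty => simp
  | basic t ht => exact hS t ht
  | compl t ht ih =>
    rw [setIntegral_compl (hm t ht) hf, setIntegral_compl (hm t ht) hg, huniv, ih]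
  | iUnion t hdisj ht ih =>
    rw [integral_iUnion (fun i => hm _ (ht i)) hdisj hf.integrableOn,
      integral_iUnion (fun i => hm _ (ht i)) hdisj hg.integrableOn]
    exact tsum_congr ih

variable {mα : MeasurableSpace α} {m mβ : MeasurableSpace β} {μ : Measure α} {ν : Measure β}

theorem condExp_prod_ae_eq_of_ae_condExp_eq [CompleteSpace E] [IsFiniteMeasure μ]
    [IsFiniteMeasure ν] (hm : m ≤ mβ) {f g : α × β → E}
    (hf : Integrable f (μ.prod ν)) (hg : Integrable g (μ.prod ν))
    (hgm : StronglyMeasurable[mα.prod m] g)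
    (hfg : ∀ᵐ a ∂μ, ν[fun b => f (a, b) | m] =ᵐ[ν] fun b => g (a, b)) :
    (μ.prod ν)[f | mα.prod m] =ᵐ[μ.prod ν] g := by
  have hle : mα.prod m ≤ mα.prod mβ := sup_le_sup_left (MeasurableSpace.comap_mono hm) _
  have hrect : ∀ (A : Set α) (B : Set β), MeasurableSet A → MeasurableSet[m] B →
      ∫ x in A ×ˢ B, f x ∂μ.prod ν = ∫ x in A ×ˢ B, g x ∂μ.prod ν := by
    intro A B hA hB
    rw [setIntegral_prod _ hf.integrableOn, setIntegral_prod _ hg.integrableOn]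
    refine setIntegral_congr_ae hA ?_
    filter_upwards [hfg, hf.prod_right_ae] with a hfga hfa _
    rw [← setIntegral_condExp hm hfa hB]
    exact setIntegral_congr_ae (hm B hB) (hfga.mono fun b hb _ => hb)
  have hset : ∀ s, MeasurableSet[mα.prod m] s →
      ∫ x in s, f x ∂μ.prod ν = ∫ x in s, g x ∂μ.prod ν := fun s hs =>
    setIntegral_eq_of_isPiSystem hle (@generateFrom_prod α β mα m).symm
      (@isPiSystem_prod α β mα m) hf hg
      (by simpa using hrect _ _ MeasurableSet.univ (@MeasurableSet.univ _ m))
      (by rintro _ ⟨A, hA, B, hB, rfl⟩; exact hrect A B hA hB) hs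
  exact (ae_eq_condExp_of_forall_setIntegral_eq hle hf (fun _ _ _ => hg.integrableOn)
    (fun s hs _ => (hset s hs).symm) hgm.aestronglyMeasurable).symm

def Filtration.prodLeft [Preorder ι] (mα : MeasurableSpace α) (ℱ : Filtration ι mβ) :
    Filtration ι (mα.prod mβ) where
  seq i := mα.prod (ℱ i)
  mono' _ _ hij := sup_le_sup_left (MeasurableSpace.comap_mono (ℱ.mono hij)) _
  le' i := sup_le_sup_left (MeasurableSpace.comap_mono (ℱ.le i)) _

theorem martingale_prod_of_ae_condExp_succ [CompleteSpace E] [IsFiniteMeasure μ]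
    [IsFiniteMeasure ν] {ℱ : Filtration ℕ mβ} {M : ℕ → α × β → E}
    (hadp : StronglyAdapted (ℱ.prodLeft mα) M) (hint : ∀ n, Integrable (M n) (μ.prod ν))
    (hM : ∀ᵐ a ∂μ, ∀ n, ν[fun b => M (n + 1) (a, b) | ℱ n] =ᵐ[ν] fun b => M n (a, b)) :
    Martingale M (ℱ.prodLeft mα) (μ.prod ν) :=
  martingale_nat hadp hint fun n => (condExp_prod_ae_eq_of_ae_condExp_eq (ℱ.le n) (hint _)
    (hint n) (hadp n) (hM.mono fun _ ha => ha n)).symm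

end MeasureTheory

theorem stmt_12_general {Ω₁ : Type*} [MeasurableSpace Ω₁]
    (μ₁ : Measure Ω₁) [IsProbabilityMeasure μ₁]
    (μ₂ : Measure (ℕ → Bool)) [IsProbabilityMeasure μ₂]
    (F : ℕ → MeasurableSpace (ℕ → Bool))
    (hF : ∀ n, F n = ⨆ i < n, MeasurableSpace.comap (fun β : ℕ → Bool => β i) ⊤)
    (G : ℕ → MeasurableSpace (Ω₁ × (ℕ → Bool)))
    (hG : ∀ n, G n = MeasurableSpace.comap (Prod.fst : Ω₁ × (ℕ → Bool) → Ω₁) inferInstance ⊔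
      ⨆ i < n, MeasurableSpace.comap (fun p : Ω₁ × (ℕ → Bool) => p.2 i) ⊤)
    (M : ℕ → Ω₁ × (ℕ → Bool) → ℝ)
    (hMint : ∀ n, Integrable (M n) (μ₁.prod μ₂))
    (hMmeas : ∀ n, StronglyMeasurable[G n] (M n))
    (hMmart : ∀ᵐ α ∂μ₁, ∀ n,
      condExp (F n) μ₂ (fun β => M (n + 1) (α, β)) =ᵐ[μ₂] fun β => M n (α, β)) :
    ∀ m n, m ≤ n → condExp (G m) (μ₁.prod μ₂) (M n) =ᵐ[μ₁.prod μ₂] M m := by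
  let ℱ : Filtration ℕ (inferInstance : MeasurableSpace (ℕ → Bool)) :=
    { seq := F
      mono' := fun m n hmn => by
        simp only [hF]
        exact iSup₂_mono' fun i hi => ⟨i, hi.trans_le hmn, le_rfl⟩
      le' := fun n => by
        rw [hF n]
        exact iSup₂_le fun i _ => (measurable_pi_apply i).comap_le }
  have hGℱ : G = ℱ.prodLeft inferInstance := by
    funext n
    rw [hG n]
    show _ = _ ⊔ MeasurableSpace.comap Prod.snd (F n)
    simp_rw [hF n, MeasurableSpace.comap_iSup, MeasurableSpace.comap_comp]
    rfl
  subst hGℱ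
  exact (martingale_prod_of_ae_condExp_succ hMmeas hMint hMmart).2

theorem stmt_12 {Ω₁ : Type*} [MeasurableSpace Ω₁]
    (μ₁ : Measure Ω₁) [IsProbabilityMeasure μ₁]
    (μ₂ : Measure (ℕ → Bool)) [IsProbabilityMeasure μ₂]
    (hμ₂ : ∀ (s : Finset ℕ) (v : ℕ → Bool),
      μ₂ {β | ∀ i ∈ s, β i = v i} = (1 / 2 : ENNReal) ^ s.card)
    (F : ℕ → MeasurableSpace (ℕ → Bool))
    (hF : ∀ n, F n = ⨆ i < n, MeasurableSpace.comap (fun β : ℕ → Bool => β i) ⊤)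
    (G : ℕ → MeasurableSpace (Ω₁ × (ℕ → Bool)))
    (hG : ∀ n, G n = MeasurableSpace.comap (Prod.fst : Ω₁ × (ℕ → Bool) → Ω₁) inferInstance ⊔
      ⨆ i < n, MeasurableSpace.comap (fun p : Ω₁ × (ℕ → Bool) => p.2 i) ⊤)
    (M : ℕ → Ω₁ × (ℕ → Bool) → ℝ)
    (hMint : ∀ n, Integrable (M n) (μ₁.prod μ₂))
    (hMmeas : ∀ n, StronglyMeasurable[G n] (M n))
    (hMmart : ∀ᵐ α ∂μ₁, ∀ n,
      condExp (F n) μ₂ (fun β => M (n + 1) (α, β)) =ᵐ[μ₂] fun β => M n (α, β)) :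
    ∀ m n, m ≤ n → condExp (G m) (μ₁.prod μ₂) (M n) =ᵐ[μ₁.prod μ₂] M m :=
  stmt_12_general μ₁ μ₂ F hF G hG M hMint hMmeas hMmart
end
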